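/- If q = 1, then the dual L* of the extended Lorentz cone L = {(x,u) ∈ ℝ^p × ℝ : x ≥ |u|e} satisfies L* = cone{(e^i,1), (e^i,−1) : i = 1,…,p}, and no set of fewer than 2p vectors generates L* (so L* is a (p+1)-dimensional polyhedral cone with minimal number of generators 2p). -/

import Mathlib

open scoped RealInnerProductSpace

/-- The extended Lorentz cone with `q = 1`:
`L = {(x,u) ∈ ℝ^p × ℝ : x ≥ |u|e}`. -/
def extendedLorentzCone1 (p : ℕ) : Set (EuclideanSpace ℝ (Fin p) × ℝ) :=
  {z | ∀ i, |z.2| ≤ z.1 i}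

/-- The dual of a set `S ⊆ ℝ^p × ℝ`. -/
def dualSet1 (p : ℕ) (S : Set (EuclideanSpace ℝ (Fin p) × ℝ)) :
    Set (EuclideanSpace ℝ (Fin p) × ℝ) :=
  {z | ∀ w ∈ S, (0:ℝ) ≤ ⟪z.1, w.1⟫ + z.2 * w.2}

/-- The cone generated by finitely many vectors `v¹,…,v^k`. -/
def coneGen {V : Type*} [AddCommMonoid V] [Module ℝ V] {k : ℕ}
    (v : Fin k → V) : Set V :=
  {z | ∃ lam : Fin k → ℝ, (∀ i, 0 ≤ lam i) ∧ z = ∑ i, lam i • v i}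

/-!
The dual cone is `L* = {(y, v) : y ≥ 0, |v| ≤ ∑ yᵢ}`: pairing with `(e, ±1)` and `(eⁱ, 0)` gives
these inequalities, and conversely `⟪y, x⟫ + v u ≥ (∑ yᵢ)|u| - |v||u| ≥ 0` on `L`. Such a
`(y, v)` is the combination `∑ yᵢ ((1 + θ)/2 (eⁱ, 1) + (1 - θ)/2 (eⁱ, -1))` with `θ = v / ∑ yᵢ`.

Each `(eⁱ, ±1)` spans an extreme ray of `L*`: if it is `a + b` with `a, b ∈ L*`, then `a` and `b`
vanish off coordinate `i`, and `|v| ≤ yᵢ` for both forces equality. A finite generating set of a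
cone contains a positive multiple of every extreme ray, and these `2p` rays are pairwise distinct,
so at least `2p` generators are needed. Finally, `(eⁱ, 0)` and `(0, 1)` are half-sums and
half-differences of generators, so `L*` spans `ℝ^p × ℝ`.
-/

section ConeGen

variable {V : Type*} [AddCommGroup V] [Module ℝ V] {k : ℕ}

def IsExtremeRay (C : Set V) (g : V) : Prop :=
  ∀ a ∈ C, ∀ b ∈ C, a + b = g → ∃ t : ℝ, 0 ≤ t ∧ a = t • g

theorem sum_smul_mem_coneGen (w : Fin k → V) {lam : Fin k → ℝ} (hlam : 0 ≤ lam) :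
    ∑ i, lam i • w i ∈ coneGen w :=
  ⟨lam, hlam, rfl⟩

theorem mem_coneGen_self (w : Fin k → V) (j : Fin k) : w j ∈ coneGen w := by
  simpa [Pi.single_apply, ite_smul] using
    sum_smul_mem_coneGen w (Pi.single_nonneg.2 zero_le_one : 0 ≤ Pi.single j (1 : ℝ))

theorem mem_coneGen_append_iff {m n : ℕ} (u : Fin m → V) (u' : Fin n → V) (z : V) :
    z ∈ coneGen (Fin.append u u') ↔ ∃ a : Fin m → ℝ, ∃ b : Fin n → ℝ,
      (∀ i, 0 ≤ a i) ∧ (∀ i, 0 ≤ b i) ∧ z = ∑ i, a i • u i + ∑ i, b i • u' i := by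
  constructor
  · rintro ⟨lam, hlam, rfl⟩
    refine ⟨fun i => lam (Fin.castAdd n i), fun i => lam (Fin.natAdd m i),
      fun _ => hlam _, fun _ => hlam _, ?_⟩
    simp [Fin.sum_univ_add]
  · rintro ⟨a, b, ha, hb, rfl⟩
    refine ⟨Fin.append a b, Fin.addCases (by simpa) (by simpa), ?_⟩
    simp [Fin.sum_univ_add]

theorem exists_smul_eq_of_isExtremeRay {w : Fin k → V} {g : V} (hg0 : g ≠ 0)
    (hg : g ∈ coneGen w) (hext : IsExtremeRay (coneGen w) g) :
    ∃ j, ∃ c : ℝ, c ≠ 0 ∧ w j = c • g := by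
  obtain ⟨lam, hlam, hg⟩ := hg
  have hsplit : ∀ j, ∃ t : ℝ, lam j • w j = t • g := by
    intro j
    have hsingle : 0 ≤ (Pi.single j (lam j) : Fin k → ℝ) := Pi.single_nonneg.2 (hlam j)
    have hrest : 0 ≤ lam - Pi.single j (lam j) := fun i => by
      rcases eq_or_ne i j with rfl | h <;> simp [*]
    obtain ⟨t, -, ht⟩ := hext _ (sum_smul_mem_coneGen w hsingle) _
      (sum_smul_mem_coneGen w hrest) (by simp [hg, sub_smul, Pi.single_apply, ite_smul])
    exact ⟨t, by simpa [Pi.single_apply, ite_smul] using ht⟩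
  choose t ht using hsplit
  have hsum : ∑ j, t j = 1 := by
    have : (∑ j, t j) • g = (1 : ℝ) • g := by
      rw [Finset.sum_smul, one_smul, ← Finset.sum_congr rfl fun j _ => ht j, hg]
    exact smul_left_injective ℝ hg0 this
  obtain ⟨j, -, hj⟩ := Finset.exists_ne_zero_of_sum_ne_zero (s := Finset.univ) (f := t)
    (by simp [hsum])
  have hlamj : lam j ≠ 0 := by
    rintro h
    exact hj (smul_left_injective ℝ hg0 (show t j • g = (0 : ℝ) • g by
      rw [← ht j, h, zero_smul, zero_smul]))
  exact ⟨j, t j / lam j, div_ne_zero hj hlamj, by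
    rw [div_eq_inv_mul, mul_smul, ← ht j, inv_smul_smul₀ hlamj]⟩

theorem card_le_of_isExtremeRay {ι : Type*} [Fintype ι] {w : Fin k → V} (g : ι → V)
    (hg0 : ∀ x, g x ≠ 0) (hg : ∀ x, g x ∈ coneGen w)
    (hext : ∀ x, IsExtremeRay (coneGen w) (g x))
    (hpar : ∀ x y (c : ℝ), g x = c • g y → x = y) : Fintype.card ι ≤ k := by
  choose F c hc hF using fun x => exists_smul_eq_of_isExtremeRay (hg0 x) (hg x) (hext x)
  have hinj : Function.Injective F := by
    intro x y hxy
    apply hpar x y ((c x)⁻¹ * c y)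
    rw [mul_smul, ← hF y, ← hxy, hF x, inv_smul_smul₀ (hc x)]
  simpa using Fintype.card_le_of_injective F hinj

end ConeGen

theorem EuclideanSpace.single_one_eq_smul_single_one_iff {ι : Type*} [DecidableEq ι] {i j : ι}
    {c : ℝ} :
    EuclideanSpace.single i (1 : ℝ) = c • EuclideanSpace.single j 1 ↔ i = j ∧ c = 1 := by
  constructor
  · intro h
    have hi := congrArg (fun x => x i) h
    by_cases hij : i = j
    · subst hij; simpa using hi.symm
    · simp [hij] at hi
  · rintro ⟨rfl, rfl⟩
    rw [one_smul]

section LorentzDual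

variable {p : ℕ}

theorem mem_dualSet1_extendedLorentzCone1_iff (z : EuclideanSpace ℝ (Fin p) × ℝ) :
    z ∈ dualSet1 p (extendedLorentzCone1 p) ↔ (∀ i, 0 ≤ z.1 i) ∧ |z.2| ≤ ∑ i, z.1 i := by
  have hinner : ∀ x : EuclideanSpace ℝ (Fin p), ⟪z.1, x⟫ = ∑ i, z.1 i * x i := fun x => by
    simp [PiLp.inner_apply, mul_comm]
  simp only [dualSet1, extendedLorentzCone1, Set.mem_ofPred_eq, Prod.forall, hinner]
  constructor
  · intro h
    refine ⟨fun i => ?_, abs_le.2 ⟨?_, ?_⟩⟩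
    · simpa using h (EuclideanSpace.single i 1) 0 fun j => by by_cases hj : j = i <;> simp [hj]
    · have := h (WithLp.toLp 2 fun _ => 1) 1 (by simp)
      simp at this
      linarith
    · have := h (WithLp.toLp 2 fun _ => 1) (-1) (by simp)
      simp at this
      linarith
  · rintro ⟨hz1, hz2⟩ x u hx
    calc 0 ≤ |z.2| * |u| + z.2 * u := by
          rw [← abs_mul]; exact neg_le_iff_add_nonneg'.mp (neg_abs_le _)
      _ ≤ (∑ i, z.1 i) * |u| + z.2 * u := by gcongr
      _ = ∑ i, z.1 i * |u| + z.2 * u := by rw [Finset.sum_mul]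
      _ ≤ ∑ i, z.1 i * x i + z.2 * u := by gcongr with i; exacts [hz1 i, hx i]

variable (p) in
noncomputable def lorentzDualGen : Fin (p + p) → EuclideanSpace ℝ (Fin p) × ℝ :=
  Fin.append (fun i => (EuclideanSpace.single i 1, 1)) (fun i => (EuclideanSpace.single i 1, -1))

@[simp]
theorem lorentzDualGen_castAdd (i : Fin p) :
    lorentzDualGen p (Fin.castAdd p i) = (EuclideanSpace.single i 1, 1) :=
  Fin.append_left ..

@[simp]
theorem lorentzDualGen_addNat (i : Fin p) :
    lorentzDualGen p (i.addNat p) = (EuclideanSpace.single i 1, -1) := by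
  rw [← Fin.natAdd_eq_addNat]
  exact Fin.append_right ..

theorem mem_coneGen_lorentzDualGen_iff (z : EuclideanSpace ℝ (Fin p) × ℝ) :
    z ∈ coneGen (lorentzDualGen p) ↔ ∃ a b : Fin p → ℝ, (∀ i, 0 ≤ a i) ∧ (∀ i, 0 ≤ b i) ∧
      (∀ i, z.1 i = a i + b i) ∧ z.2 = ∑ i, a i - ∑ i, b i := by
  rw [lorentzDualGen, mem_coneGen_append_iff]
  refine exists_congr fun a => exists_congr fun b => and_congr_right fun _ =>
    and_congr_right fun _ => ?_
  have hsum : ∑ i, a i • ((EuclideanSpace.single i 1, 1) : EuclideanSpace ℝ (Fin p) × ℝ) +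
      ∑ i, b i • (EuclideanSpace.single i 1, -1) =
        (WithLp.toLp 2 (a + b), ∑ i, a i - ∑ i, b i) := by
    ext j
    · simp [Prod.fst_sum, Pi.single_apply]
    · simp [Prod.snd_sum, sub_eq_add_neg]
  rw [hsum, Prod.ext_iff, PiLp.ext_iff]
  simp

theorem coneGen_lorentzDualGen (p : ℕ) :
    coneGen (lorentzDualGen p) = dualSet1 p (extendedLorentzCone1 p) := by
  ext z
  rw [mem_coneGen_lorentzDualGen_iff, mem_dualSet1_extendedLorentzCone1_iff]
  constructor
  · rintro ⟨a, b, ha, hb, h1, h2⟩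
    have hsa := Finset.sum_nonneg fun i (_ : i ∈ Finset.univ) => ha i
    have hsb := Finset.sum_nonneg fun i (_ : i ∈ Finset.univ) => hb i
    simp only [h1, Finset.sum_add_distrib, h2]
    exact ⟨fun i => add_nonneg (ha i) (hb i), abs_le.2 ⟨by linarith, by linarith⟩⟩
  · rintro ⟨hz1, hz2⟩
    set s := ∑ i, z.1 i
    have hs : 0 ≤ s := (abs_nonneg _).trans hz2
    -- If `s = 0` then `z = 0`, and the junk value `θ = 0` still gives a valid combination.
    set θ := z.2 / s
    have hθ : |θ| ≤ 1 := by
      rw [abs_div, abs_of_nonneg hs]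
      exact div_le_one_of_le₀ hz2 hs
    obtain ⟨hθl, hθr⟩ := abs_le.1 hθ
    refine ⟨fun i => z.1 i * ((1 + θ) / 2), fun i => z.1 i * ((1 - θ) / 2),
      fun i => mul_nonneg (hz1 i) (by linarith), fun i => mul_nonneg (hz1 i) (by linarith),
      fun i => by ring, ?_⟩
    have hθs : θ * s = z.2 :=
      div_mul_cancel_of_imp fun h0 => abs_nonpos_iff.1 (h0 ▸ hz2)
    rw [← Finset.sum_mul, ← Finset.sum_mul, ← hθs]
    ring

theorem isExtremeRay_dualSet1_single {ε : ℝ} (hε : |ε| = 1) (i : Fin p) :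
    IsExtremeRay (dualSet1 p (extendedLorentzCone1 p)) (EuclideanSpace.single i 1, ε) := by
  intro a ha b hb hab
  rw [mem_dualSet1_extendedLorentzCone1_iff] at ha hb
  have hfst : ∀ l, a.1 l + b.1 l = EuclideanSpace.single i (1 : ℝ) l := fun l => by
    simpa using congrArg (fun z => z.1 l) hab
  have hoff : ∀ l ≠ i, a.1 l = 0 ∧ b.1 l = 0 := fun l hl =>
    (add_eq_zero_iff_of_nonneg (ha.1 l) (hb.1 l)).1 (by simpa [hl] using hfst l)
  have hsum_a : ∑ l, a.1 l = a.1 i :=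
    Finset.sum_eq_single i (fun l _ hl => (hoff l hl).1) (by simp)
  have hsum_b : ∑ l, b.1 l = b.1 i :=
    Finset.sum_eq_single i (fun l _ hl => (hoff l hl).2) (by simp)
  have hεε : ε * ε = 1 := by rw [← abs_mul_abs_self, hε, one_mul]
  have hεa : ε * a.2 ≤ a.1 i := (le_abs_self _).trans <| by
    rw [abs_mul, hε, one_mul, ← hsum_a]; exact ha.2
  have hεb : ε * b.2 ≤ b.1 i := (le_abs_self _).trans <| by
    rw [abs_mul, hε, one_mul, ← hsum_b]; exact hb.2
  have hi : a.1 i + b.1 i = 1 := by simpa using hfst i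
  have hsnd : ε * a.2 + ε * b.2 = 1 := by
    rw [← mul_add, ← hεε]; simpa using congrArg (fun z => ε * z.2) hab
  have hεa_eq : ε * a.2 = a.1 i := by linarith
  refine ⟨a.1 i, ha.1 i, ?_⟩
  ext l
  · by_cases hl : l = i
    · subst hl; simp
    · simp [hl, (hoff l hl).1]
  · simp only [Prod.smul_snd, smul_eq_mul, ← hεa_eq]
    linear_combination -a.2 * hεε

theorem lorentzDualGen_ne_zero (x : Fin (p + p)) : lorentzDualGen p x ≠ 0 := by
  refine Fin.addCases (fun i => ?_) (fun i => ?_) x <;> simp [Prod.ext_iff]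

theorem eq_of_lorentzDualGen_eq_smul {x y : Fin (p + p)} {c : ℝ}
    (h : lorentzDualGen p x = c • lorentzDualGen p y) : x = y := by
  revert h
  refine Fin.addCases (fun i => ?_) (fun i => ?_) x <;>
    refine Fin.addCases (fun j => ?_) (fun j => ?_) y <;>
    simp +contextual [Prod.ext_iff, EuclideanSpace.single_one_eq_smul_single_one_iff] <;>
    norm_num

theorem isExtremeRay_lorentzDualGen (x : Fin (p + p)) :
    IsExtremeRay (dualSet1 p (extendedLorentzCone1 p)) (lorentzDualGen p x) := by
  refine Fin.addCases (fun i => ?_) (fun i => ?_) x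
  · simpa using isExtremeRay_dualSet1_single (abs_one (α := ℝ)) _
  · simpa using isExtremeRay_dualSet1_single (by norm_num) _

theorem span_dualSet1_extendedLorentzCone1_eq_top (hp : 0 < p) :
    Submodule.span ℝ (dualSet1 p (extendedLorentzCone1 p)) = ⊤ := by
  have hgen (x : Fin (p + p)) :
      lorentzDualGen p x ∈ Submodule.span ℝ (dualSet1 p (extendedLorentzCone1 p)) :=
    Submodule.subset_span (coneGen_lorentzDualGen p ▸ mem_coneGen_self _ x)
  let B := (EuclideanSpace.basisFun (Fin p) ℝ).toBasis.prod (Module.Basis.singleton Unit ℝ)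
  rw [eq_top_iff, ← B.span_eq, Submodule.span_le]
  rintro _ ⟨i | -, rfl⟩
  · have hi : B (.inl i) =
        (2 : ℝ)⁻¹ • (lorentzDualGen p (Fin.castAdd p i) + lorentzDualGen p (i.addNat p)) := by
      ext j
      · simp [B]; split_ifs <;> norm_num
      · simp [B]
    rw [hi]
    exact Submodule.smul_mem _ _ (add_mem (hgen _) (hgen _))
  · let i : Fin p := ⟨0, hp⟩
    have h01 : B (.inr ()) =
        (2 : ℝ)⁻¹ • (lorentzDualGen p (Fin.castAdd p i) - lorentzDualGen p (i.addNat p)) := by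
      ext j
      · simp [B]
      · norm_num [B]
    rw [h01]
    exact Submodule.smul_mem _ _ (sub_mem (hgen _) (hgen _))

end LorentzDual

/-- For `q = 1`, the dual `L*` of the extended Lorentz cone is generated by
the `2p` vectors `(e^i,1), (e^i,−1)`, `i = 1,…,p`, cannot be generated by
fewer than `2p` vectors, and is `(p+1)`-dimensional. -/
theorem stmt5 (p : ℕ) (hp : 0 < p) :
    dualSet1 p (extendedLorentzCone1 p) =
      coneGen (Fin.append (fun i : Fin p => (EuclideanSpace.single i (1:ℝ), (1:ℝ)))
        (fun i : Fin p => (EuclideanSpace.single i (1:ℝ), (-1:ℝ)))) ∧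
    (∀ k : ℕ, k < 2 * p → ∀ w : Fin k → EuclideanSpace ℝ (Fin p) × ℝ,
      dualSet1 p (extendedLorentzCone1 p) ≠ coneGen w) ∧
    Module.finrank ℝ (Submodule.span ℝ (dualSet1 p (extendedLorentzCone1 p))) = p + 1 := by
  refine ⟨(coneGen_lorentzDualGen p).symm, fun k hk w hw => ?_, ?_⟩
  · have hgen_mem (x : Fin (p + p)) : lorentzDualGen p x ∈ coneGen w :=
      hw ▸ coneGen_lorentzDualGen p ▸ mem_coneGen_self _ x
    have hcard := card_le_of_isExtremeRay (lorentzDualGen p) lorentzDualGen_ne_zero hgen_mem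
      (fun x => hw ▸ isExtremeRay_lorentzDualGen x) fun _ _ _ => eq_of_lorentzDualGen_eq_smul
    rw [Fintype.card_fin] at hcard
    omega
  · rw [span_dualSet1_extendedLorentzCone1_eq_top hp, finrank_top, Module.finrank_prod,
      finrank_euclideanSpace_fin, Module.finrank_self]
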